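/- Let K be a field and let α be an element of an extension field that is transcendental over K. Then for any nonconstant rational function φ(T) ∈ K(T), the element α is algebraic over the subfield K(φ(α)), and the degree [K(α) : K(φ(α))] equals max(deg p, deg q) where φ = p/q in lowest terms. -/

import Mathlib

/-!
Since `α` is transcendental, `X ↦ α` embeds `K(X)` into `L` with image `K(α)`, carrying `K(φ)`
onto `K(φ(α))`. Field embeddings preserve relative degrees, so `[K(φ(α))(α) : K(φ(α))]` is the
degree `[K(X) : K(φ)] = max (deg p) (deg q)` of the rational function field over `K(φ)`. When `φ`
is nonconstant this degree is positive, so `α` is algebraic over `K(φ(α))`.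
-/

open IntermediateField Polynomial

namespace IntermediateField

variable {K L : Type*} [Field K] [Field L] [Algebra K L]

theorem finrank_adjoin_eq_relfinrank {E : IntermediateField K L} {S : Set L}
    (h : E ≤ adjoin K S) : Module.finrank E (adjoin E S) = relfinrank E (adjoin K S) := by
  rw [relfinrank_eq_finrank_of_le h, extendScalars_adjoin]

theorem isAlgebraic_of_finrank_adjoin_simple_ne_zero {E : IntermediateField K L} {α : L}
    (h : Module.finrank E E⟮α⟯ ≠ 0) : IsAlgebraic E α :=
  have : FiniteDimensional E E⟮α⟯ := Module.finite_of_finrank_pos (Nat.pos_of_ne_zero h)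
  ((AdjoinSimple.isIntegral_gen E α).mp (IsIntegral.of_finite E _)).isAlgebraic

end IntermediateField

namespace RatFunc

variable {K L : Type*} [Field K] [Field L] [Algebra K L]

theorem finrank_adjoin_aeval_div_aeval {α : L} (hα : Transcendental K α) (φ : RatFunc K) :
    Module.finrank K⟮aeval α φ.num / aeval α φ.denom⟯
        (K⟮aeval α φ.num / aeval α φ.denom⟯⟮α⟯) = max φ.num.natDegree φ.denom.natDegree := by
  set ψ : RatFunc K →ₐ[K] L := (K⟮α⟯).val.comp (algEquivOfTranscendental α hα)
  have hψX : ψ X = α := by simp [ψ]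
  have hψφ : ψ φ = aeval α φ.num / aeval α φ.denom := algEquivOfTranscendental_apply α hα φ
  have hmap_φ : K⟮aeval α φ.num / aeval α φ.denom⟯ = (adjoin K {φ}).map ψ := by
    rw [adjoin_map, Set.image_singleton, hψφ]
  have hmap_top : K⟮α⟯ = (⊤ : IntermediateField K (RatFunc K)).map ψ := by
    rw [← adjoin_X, adjoin_map, Set.image_singleton, hψX]
  have hle : K⟮aeval α φ.num / aeval α φ.denom⟯ ≤ K⟮α⟯ := by
    rw [hmap_φ, hmap_top]
    exact map_mono ψ le_top
  rw [finrank_adjoin_eq_relfinrank hle, hmap_φ, hmap_top, relfinrank_map_map, relfinrank_top_right,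
    finrank_eq_max_natDegree]

end RatFunc

theorem stmt12 (K L : Type) [Field K] [Field L] [Algebra K L]
    (α : L) (hα : Transcendental K α)
    (φ : RatFunc K) (hφ : 1 ≤ max φ.num.natDegree φ.denom.natDegree) :
    IsAlgebraic (K⟮aeval α φ.num / aeval α φ.denom⟯) α ∧
    Module.finrank (K⟮aeval α φ.num / aeval α φ.denom⟯)
        ((K⟮aeval α φ.num / aeval α φ.denom⟯)⟮α⟯) =
      max φ.num.natDegree φ.denom.natDegree := by
  have hrank := RatFunc.finrank_adjoin_aeval_div_aeval hα φ
  exact ⟨isAlgebraic_of_finrank_adjoin_simple_ne_zero (by omega), hrank⟩
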